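/- arXiv:1608.08156 — 2 statements merged into one kernel-verified Lean document; each statement's English description precedes it below -/
import Mathlib

section
/- Let K be an infinite perfect field of characteristic p > 0, S = K[x,y,z,w], and f as in the 4-dimensional example (f = (xyz)^{p-1}·(x^p w^{p-1} + (y^{p-1}z)^p w^{p-2} + ... + (yz^{p-1})^p)). Let l = c_0 + c_x x + c_y y + c_z z + c_w w with all coefficients c_0, c_x, c_y, c_z, c_w ∈ K nonzero. Then Φ(F_*(f·S)) ≠ Φ(F_*(f·l·S)); in fact x ∈ Φ(F_*(f·S)) but x ∉ Φ(F_*(f·l·S)). -/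
open MvPolynomial

/-- For `F_*S` free over `S = K[x_1,…,x_n]` with basis `{F_*(x^α) : α ∈ {0,…,p-1}^n}`,
`frobCoeff p α f` is the coefficient `s_α ∈ S` in the expansion
`F_*f = Σ_α s_α • F_*(x^α)`, i.e. `f = Σ_α s_α^p x^α`. -/
noncomputable def frobCoeff {K : Type*} [Field K] (p : ℕ) [Fact p.Prime] [ExpChar K p]
    [PerfectRing K p] {n : ℕ} (α : Fin n → ℕ) (f : MvPolynomial (Fin n) K) :
    MvPolynomial (Fin n) K :=
  ∑ d ∈ f.support,
    if ∀ i, d i % p = α i then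
      monomial (Finsupp.mapRange (· / p) (Nat.zero_div p) d)
        ((frobeniusEquiv K p).symm (f.coeff d))
    else 0

/-- The generating trace map `Φ : F_*S → S`, the `S`-linear projection onto the
coefficient of `F_*(x_1^(p-1) ⋯ x_n^(p-1))`. -/
noncomputable def phi {K : Type*} [Field K] (p : ℕ) [Fact p.Prime] [ExpChar K p]
    [PerfectRing K p] {n : ℕ} (f : MvPolynomial (Fin n) K) : MvPolynomial (Fin n) K :=
  frobCoeff p (fun _ => p - 1) f

/-- The ideal `Φ(F_*(f•S)) = {Φ(F_*(f•h)) : h ∈ S}`, which computes the test ideal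
`τ(S, f^(1/p))`. -/
noncomputable def tauP {K : Type*} [Field K] (p : ℕ) [Fact p.Prime] [ExpChar K p]
    [PerfectRing K p] {n : ℕ} (f : MvPolynomial (Fin n) K) : Ideal (MvPolynomial (Fin n) K) :=
  Ideal.span {g | ∃ h, g = phi p (f * h)}

/-- The polynomials `f_(p-1) = x`, `f_j = y^(j+1) z^(p-1-j)` for `j < p-1` (so
`f_(p-1-i) = y^(p-i) z^i`), in `S = K[x,y,z,w]` with `x = X 0`, `y = X 1`, `z = X 2`,
`w = X 3`. -/
noncomputable def fCoeff {K : Type*} [Field K] (p j : ℕ) : MvPolynomial (Fin 4) K :=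
  if j = p - 1 then X 0 else X 1 ^ (j + 1) * X 2 ^ (p - 1 - j)

/-- The 4-dimensional example
`f = (xyz)^(p-1) ( x^p w^(p-1) + (y^(p-1)z)^p w^(p-2) + … + (yz^(p-1))^p )`,
i.e. `F_*f = F_*((xyz)^(p-1))·[x F_*(w^(p-1)) + y^(p-1)z F_*(w^(p-2)) + … + yz^(p-1)]`. -/
noncomputable def fDim4 {K : Type*} [Field K] (p : ℕ) : MvPolynomial (Fin 4) K :=
  (X 0 * X 1 * X 2) ^ (p - 1) * ∑ j ∈ Finset.range p, fCoeff p j ^ p * X 3 ^ j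

/-!
Since `Φ` is `p⁻¹`-linear, `Φ(F_*(f·v)) = Σ_j f_j · Φ(F_*((xyz)^(p-1) w^j v))`, and in
particular `Φ(F_* f) = f_(p-1) = x`. Conversely, for each `k` exactly one monomial of `f`,
multiplied by `w^k`, lands on an exponent of the form `p·m + (p-1,…,p-1)`, and the corresponding
`m` is `(1,0,0,0)` only for `k = 0`. Hence `Φ(F_*(f·v)) = x` forces `v ≡ 1` modulo `(x, y, z)`.
For `v = l·h` this makes `c₀ + c_w w` a unit of `K[w]`, which is impossible when `c_w ≠ 0`.
-/

lemma exists_frobenius_lift (p : ℕ) {n : ℕ} (m : Fin n →₀ ℕ) :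
    ∃ d : Fin n →₀ ℕ, ∀ i, d i = p * m i + (p - 1) :=
  ⟨Finsupp.equivFunOnFinite.symm fun i => p * m i + (p - 1), fun _ => rfl⟩

section FrobeniusTrace

variable {K : Type*} [Field K] (p : ℕ) [Fact p.Prime] [ExpChar K p] [PerfectRing K p] {n : ℕ}

lemma coeff_phi {m d : Fin n →₀ ℕ} (hd : ∀ i, d i = p * m i + (p - 1))
    (f : MvPolynomial (Fin n) K) :
    coeff m (phi p f) = (frobeniusEquiv K p).symm (coeff d f) := by
  have hp : 0 < p := (Fact.out : p.Prime).pos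
  have hdiv : Finsupp.mapRange (· / p) (Nat.zero_div p) d = m := by
    ext i
    simp only [Finsupp.mapRange_apply, hd i]
    rw [Nat.mul_add_div hp, Nat.div_eq_of_lt (by omega), add_zero]
  have hmod : ∀ i, d i % p = p - 1 := fun i => by
    rw [hd i, Nat.mul_add_mod, Nat.mod_eq_of_lt (by omega)]
  classical
  rw [phi, frobCoeff, coeff_sum, Finset.sum_eq_single d]
  · rw [if_pos hmod, hdiv, coeff_monomial, if_pos rfl]
  · intro e _ hed
    split_ifs with he
    · rw [coeff_monomial, if_neg]
      rintro rfl
      refine hed (Finsupp.ext fun i => ?_)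
      rw [← Nat.div_add_mod (e i) p, he i, hd i]
      simp
    · exact coeff_zero _
  · intro hd
    rw [notMem_support_iff.mp hd, map_zero]
    simp

lemma phi_add (f g : MvPolynomial (Fin n) K) : phi p (f + g) = phi p f + phi p g := by
  ext m
  obtain ⟨d, hd⟩ := exists_frobenius_lift p m
  simp only [coeff_add, coeff_phi p hd, map_add]

lemma phi_monomial_pow_mul (e : Fin n →₀ ℕ) (a : K) (f : MvPolynomial (Fin n) K) :
    phi p (monomial e a ^ p * f) = monomial e a * phi p f := by
  have hp : 0 < p := (Fact.out : p.Prime).pos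
  ext m
  obtain ⟨d, hd⟩ := exists_frobenius_lift p m
  rw [coeff_phi p hd, monomial_pow, coeff_monomial_mul', coeff_monomial_mul']
  have hle : p • e ≤ d ↔ e ≤ m := by
    simp only [Finsupp.le_def, Finsupp.smul_apply, smul_eq_mul, hd]
    refine forall_congr' fun i => ⟨fun h => ?_, fun h => ?_⟩
    · by_contra! hlt
      have := Nat.mul_le_mul_left p (Nat.succ_le_of_lt hlt)
      rw [Nat.mul_succ] at this
      omega
    · have := Nat.mul_le_mul_left p h
      omega
  by_cases he : e ≤ m
  · rw [if_pos (hle.mpr he), if_pos he, map_mul, frobeniusEquiv_symm_pow,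
      coeff_phi p (m := m - e)]
    intro i
    simp only [Finsupp.tsub_apply, Finsupp.smul_apply, smul_eq_mul, hd, Nat.mul_sub]
    have := Nat.mul_le_mul_left p (he i)
    omega
  · rw [if_neg (hle.not.mpr he), if_neg he, map_zero]

lemma phi_pow_mul (s f : MvPolynomial (Fin n) K) : phi p (s ^ p * f) = s * phi p f := by
  induction s using MvPolynomial.induction_on' with
  | monomial e a => exact phi_monomial_pow_mul p e a f
  | add s t hs ht => rw [add_pow_expChar, add_mul, phi_add, hs, ht, add_mul]

lemma phi_sum {ι : Type*} (s : Finset ι) (f : ι → MvPolynomial (Fin n) K) :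
    phi p (∑ i ∈ s, f i) = ∑ i ∈ s, phi p (f i) :=
  map_sum (AddMonoidHom.mk' (phi p) (phi_add p)) f s

lemma phi_zero : phi p (0 : MvPolynomial (Fin n) K) = 0 := by
  simpa using phi_add p (0 : MvPolynomial (Fin n) K) 0

lemma mem_tauP_iff {f g : MvPolynomial (Fin n) K} : g ∈ tauP p f ↔ ∃ h, g = phi p (f * h) := by
  refine ⟨fun hg => ?_, fun hg => Ideal.subset_span hg⟩
  induction hg using Submodule.span_induction with
  | mem g hg => exact hg
  | zero => exact ⟨0, by rw [mul_zero, phi_zero]⟩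
  | add g g' _ _ hg hg' =>
    obtain ⟨h, rfl⟩ := hg
    obtain ⟨h', rfl⟩ := hg'
    exact ⟨h + h', by rw [mul_add, phi_add]⟩
  | smul s g _ hg =>
    obtain ⟨h, rfl⟩ := hg
    exact ⟨s ^ p * h, by rw [smul_eq_mul, mul_left_comm, phi_pow_mul]⟩

lemma phi_monomial_of_lt {e : Fin n →₀ ℕ} (he : ∀ i, e i < p) :
    phi p (monomial e (1 : K)) = if ∀ i, e i = p - 1 then 1 else 0 := by
  ext m
  obtain ⟨d, hd⟩ := exists_frobenius_lift p m
  rw [coeff_phi p hd, coeff_monomial]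
  have hp : 0 < p := (Fact.out : p.Prime).pos
  have key : e = d ↔ m = 0 ∧ ∀ i, e i = p - 1 := by
    simp only [Finsupp.ext_iff, hd, Finsupp.coe_zero, Pi.zero_apply, ← forall_and]
    refine forall_congr' fun i => ⟨fun h => ?_, fun ⟨h0, h1⟩ => by rw [h0, h1]; ring⟩
    have := he i
    rcases Nat.eq_zero_or_pos (m i) with h0 | h0
    · omega
    · have := Nat.mul_le_mul_left p h0
      omega
  by_cases h : ∀ i, e i = p - 1
  · by_cases hm : m = 0 <;> simp [key, h, hm, coeff_one, eq_comm (a := (0 : Fin n →₀ ℕ))]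
  · simp [key, h, coeff_zero]

end FrobeniusTrace

lemma killCompl_eq_one_of_coeff_single {R σ : Type*} [CommSemiring R] {i : σ}
    {v : MvPolynomial σ R} (hv : ∀ k, coeff (Finsupp.single i k) v = if k = 0 then 1 else 0) :
    killCompl (Function.injective_of_subsingleton fun _ : Unit => i) v = 1 := by
  ext s
  obtain ⟨k, rfl⟩ : ∃ k, s = Finsupp.single () k := ⟨s (), Finsupp.unique_single s⟩
  rw [coeff_killCompl, Finsupp.mapDomain_single, hv, coeff_one]
  simp [eq_comm]

section FDim4Monomials

variable {K : Type*} [Field K] (p : ℕ)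

noncomputable def fCoeffExp (j : ℕ) : Fin 4 →₀ ℕ :=
  if j = p - 1 then Finsupp.single 0 1 else Finsupp.single 1 (j + 1) + Finsupp.single 2 (p - 1 - j)

noncomputable def baseExp (j : ℕ) : Fin 4 →₀ ℕ :=
  Finsupp.single 0 (p - 1) + Finsupp.single 1 (p - 1) + Finsupp.single 2 (p - 1) +
    Finsupp.single 3 j

noncomputable def fDim4Exp (j : ℕ) : Fin 4 →₀ ℕ := baseExp p j + p • fCoeffExp p j

lemma fCoeffExp_apply_three (j : ℕ) : fCoeffExp p j 3 = 0 := by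
  unfold fCoeffExp
  split_ifs <;> simp

lemma fDim4Exp_apply (j : ℕ) (i : Fin 4) :
    fDim4Exp p j i = p * fCoeffExp p j i + if i = 3 then j else p - 1 := by
  fin_cases i <;> simp [fDim4Exp, baseExp, add_comm]

lemma fCoeff_eq_monomial (j : ℕ) : fCoeff p j = monomial (fCoeffExp p j) (1 : K) := by
  unfold fCoeff fCoeffExp
  split_ifs
  · rfl
  · rw [X_pow_eq_monomial, X_pow_eq_monomial, monomial_mul, one_mul]

lemma fDim4_eq_sum : fDim4 (K := K) p =
    ∑ j ∈ Finset.range p, fCoeff p j ^ p * monomial (baseExp p j) 1 := by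
  rw [fDim4, Finset.mul_sum]
  refine Finset.sum_congr rfl fun j _ => ?_
  simp only [baseExp, mul_pow, X_pow_eq_monomial, monomial_mul, one_mul]
  rw [mul_left_comm, monomial_mul, one_mul]

lemma fDim4_eq_sum_monomial : fDim4 (K := K) p =
    ∑ j ∈ Finset.range p, monomial (fDim4Exp p j) 1 := by
  simp only [fDim4_eq_sum, fCoeff_eq_monomial, monomial_pow, monomial_mul, one_pow, one_mul,
    fDim4Exp, add_comm]

lemma fDim4Exp_le_add_single_iff {j j' : ℕ} (hj : j < p) (hj' : j' < p) (k : ℕ) :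
    fDim4Exp p j ≤ fDim4Exp p j' + Finsupp.single 3 k ↔ j = j' := by
  refine ⟨fun h => ?_, fun h => h ▸ le_self_add⟩
  have hE : ∀ i ≠ 3, fCoeffExp p j i ≤ fCoeffExp p j' i := fun i hi => by
    have hi' := h i
    rw [Finsupp.add_apply, fDim4Exp_apply, fDim4Exp_apply, Finsupp.single_eq_of_ne hi, if_neg hi,
      if_neg hi, add_zero, add_le_add_iff_right] at hi'
    exact Nat.le_of_mul_le_mul_left hi' (by omega)
  have h0 := hE 0 (by decide)
  have h1 := hE 1 (by decide)
  have h2 := hE 2 (by decide)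
  unfold fCoeffExp at h0 h1 h2
  split_ifs at h0 h1 h2 <;>
    simp only [Finsupp.add_apply, Finsupp.single_apply, Fin.reduceEq, if_true, if_false]
      at h0 h1 h2 <;>
    omega

lemma coeff_fDim4Exp_add_single_mul {j : ℕ} (hj : j < p) (k : ℕ) (v : MvPolynomial (Fin 4) K) :
    coeff (fDim4Exp p j + Finsupp.single 3 k) (fDim4 p * v) = coeff (Finsupp.single 3 k) v := by
  rw [fDim4_eq_sum_monomial, Finset.sum_mul, coeff_sum, Finset.sum_eq_single_of_mem j
    (Finset.mem_range.mpr hj), coeff_monomial_mul', if_pos le_self_add, add_tsub_cancel_left,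
    one_mul]
  intro j' hj' hne
  rw [coeff_monomial_mul', if_neg]
  rwa [fDim4Exp_le_add_single_iff p (Finset.mem_range.mp hj') hj]

lemma coeff_fCoeffExp_add_single_X_zero (hp : 0 < p) (k : ℕ) :
    coeff (fCoeffExp p (p - 1 - k % p) + Finsupp.single 3 (k / p))
      (X 0 : MvPolynomial (Fin 4) K) = if k = 0 then 1 else 0 := by
  have hk := Nat.div_add_mod k p
  have key : Finsupp.single 0 1 = fCoeffExp p (p - 1 - k % p) + Finsupp.single 3 (k / p) ↔
      k = 0 := by
    refine ⟨fun h => ?_, fun h => by simp [h, fCoeffExp]⟩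
    have h0 := DFunLike.congr_fun h 0
    have h3 := DFunLike.congr_fun h 3
    rw [Finsupp.add_apply, fCoeffExp_apply_three] at h3
    unfold fCoeffExp at h0
    have hr := Nat.mod_lt k hp
    split_ifs at h0 with hj
    · rw [Finsupp.single_eq_of_ne (by decide), Finsupp.single_eq_same, zero_add] at h3
      rw [← h3, mul_zero] at hk
      omega
    · simp at h0
  rw [coeff_X]
  exact if_congr key rfl rfl

end FDim4Monomials

section FDim4Trace

variable {K : Type*} [Field K] (p : ℕ) [Fact p.Prime] [ExpChar K p] [PerfectRing K p]

lemma phi_fDim4 : phi p (fDim4 (K := K) p) = X 0 := by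
  have hp : 0 < p := (Fact.out : p.Prime).pos
  have hbase : ∀ j ∈ Finset.range p, phi p (fCoeff p j ^ p * monomial (baseExp p j) (1 : K)) =
      if j = p - 1 then fCoeff p j else 0 := by
    intro j hj
    have hj := Finset.mem_range.mp hj
    have hlt : ∀ i, baseExp p j i < p := by
      intro i; fin_cases i <;> simp [baseExp] <;> omega
    have hcorner : (∀ i, baseExp p j i = p - 1) ↔ j = p - 1 :=
      ⟨fun h => by simpa [baseExp] using h 3, fun h i => by fin_cases i <;> simp [baseExp, h]⟩
    rw [phi_pow_mul, phi_monomial_of_lt p hlt]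
    split_ifs <;> simp_all
  rw [fDim4_eq_sum, phi_sum, Finset.sum_congr rfl hbase,
    Finset.sum_ite_eq', if_pos (Finset.mem_range.mpr (by omega)), fCoeff, if_pos rfl]

/-- The `w`-exponent `j + k` of `fDim4Exp p j + w^k` is `≡ p - 1` exactly for
`j = p - 1 - k % p`. -/
lemma coeff_phi_fDim4_mul (k : ℕ) (v : MvPolynomial (Fin 4) K) :
    coeff (fCoeffExp p (p - 1 - k % p) + Finsupp.single 3 (k / p)) (phi p (fDim4 p * v)) =
      (frobeniusEquiv K p).symm (coeff (Finsupp.single 3 k) v) := by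
  have hp : 0 < p := (Fact.out : p.Prime).pos
  have hk := Nat.div_add_mod k p
  have hr := Nat.mod_lt k hp
  rw [coeff_phi p (d := fDim4Exp p (p - 1 - k % p) + Finsupp.single 3 k),
    coeff_fDim4Exp_add_single_mul p (by omega)]
  intro i
  rw [Finsupp.add_apply, fDim4Exp_apply, Finsupp.add_apply, mul_add]
  rcases eq_or_ne i 3 with rfl | hi
  · simp only [fCoeffExp_apply_three, Finsupp.single_eq_same, if_pos]
    omega
  · simp [hi]

lemma coeff_single_three_eq_of_phi_fDim4_mul_eq_X {v : MvPolynomial (Fin 4) K}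
    (hv : phi p (fDim4 p * v) = X 0) (k : ℕ) :
    coeff (Finsupp.single 3 k) v = if k = 0 then 1 else 0 := by
  apply (frobeniusEquiv K p).symm.injective
  rw [← coeff_phi_fDim4_mul, hv, coeff_fCoeffExp_add_single_X_zero p (Fact.out : p.Prime).pos]
  split_ifs <;> simp

lemma X_zero_notMem_tauP_fDim4_mul {L : MvPolynomial (Fin 4) K}
    (hL : coeff (Finsupp.single 3 1) L ≠ 0) : X 0 ∉ tauP p (fDim4 p * L) := by
  rw [mem_tauP_iff]
  rintro ⟨v, hv⟩
  set κ := killCompl (R := K) (Function.injective_of_subsingleton fun _ : Unit => (3 : Fin 4))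
  have hLv : κ L * κ v = 1 := by
    rw [← map_mul, killCompl_eq_one_of_coeff_single]
    exact coeff_single_three_eq_of_phi_fDim4_mul_eq_X p (by rw [← mul_assoc, hv])
  have := (MvPolynomial.isUnit_iff.mp (IsUnit.of_mul_eq_one _ hLv)).2 (Finsupp.single () 1)
    (by simp)
  rw [coeff_killCompl, Finsupp.mapDomain_single, isNilpotent_iff_eq_zero] at this
  exact hL this

end FDim4Trace

theorem statement5_general {K : Type*} [Field K] (p : ℕ) [Fact p.Prime] [ExpChar K p]
    [PerfectRing K p] (c0 cx cy cz cw : K) (hw : cw ≠ 0) :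
    tauP p (fDim4 (K := K) p) ≠
        tauP p (fDim4 (K := K) p * (C c0 + C cx * X 0 + C cy * X 1 + C cz * X 2 + C cw * X 3)) ∧
      (X 0 : MvPolynomial (Fin 4) K) ∈ tauP p (fDim4 (K := K) p) ∧
      (X 0 : MvPolynomial (Fin 4) K) ∉
        tauP p (fDim4 (K := K) p * (C c0 + C cx * X 0 + C cy * X 1 + C cz * X 2 + C cw * X 3)) := by
  have hmem : (X 0 : MvPolynomial (Fin 4) K) ∈ tauP p (fDim4 p) :=
    (mem_tauP_iff p).mpr ⟨1, by rw [mul_one, phi_fDim4]⟩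
  have hnot := X_zero_notMem_tauP_fDim4_mul p
    (L := C c0 + C cx * X 0 + C cy * X 1 + C cz * X 2 + C cw * X 3)
    (by simpa [coeff_X, coeff_C, Finsupp.single_eq_single_iff, eq_comm (a := (0 : Fin 4 →₀ ℕ))]
      using hw)
  exact ⟨fun h => hnot (h ▸ hmem), hmem, hnot⟩

/-- failure of the Kollár–Bertini theorem for test ideals: for the
4-dimensional example `f` and any `l = c₀ + c_x x + c_y y + c_z z + c_w w` with all
coefficients nonzero, `Φ(F_*(f·S)) ≠ Φ(F_*(f·l·S))`; in fact `x ∈ Φ(F_*(f·S))` but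
`x ∉ Φ(F_*(f·l·S))`. -/
theorem statement5 {K : Type*} [Field K] [Infinite K] (p : ℕ) [Fact p.Prime] [ExpChar K p]
    [PerfectRing K p] (c0 cx cy cz cw : K) (h0 : c0 ≠ 0) (hx : cx ≠ 0) (hy : cy ≠ 0)
    (hz : cz ≠ 0) (hw : cw ≠ 0) :
    tauP p (fDim4 (K := K) p) ≠
        tauP p (fDim4 (K := K) p * (C c0 + C cx * X 0 + C cy * X 1 + C cz * X 2 + C cw * X 3)) ∧
      (X 0 : MvPolynomial (Fin 4) K) ∈ tauP p (fDim4 (K := K) p) ∧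
      (X 0 : MvPolynomial (Fin 4) K) ∉
        tauP p (fDim4 (K := K) p * (C c0 + C cx * X 0 + C cy * X 1 + C cz * X 2 + C cw * X 3)) :=
  statement5_general p c0 cx cy cz cw hw
end

section
/- Let K be a perfect field of characteristic p > 0 and S = K[x_1,...,x_n]. Let f ∈ S and l = c_0 + c_1x_1 + ... + c_nx_n. Write F_*f = Σ_{α ∈ Λ} s_α F_*(x^α) with Λ = {0,...,p-1}^n. Then, writing F_*(c_j) = c_j^{1/p} F_*(1), we have Φ(F_*(f·l·S)) = ⟨ c_0^{1/p} s_α + Σ_{j: α_j > 0} c_j^{1/p} s_{α - 1_j} + Σ_{j: α_j = 0} c_j^{1/p} s_{α + (p-1)·1_j} x_j : α ∈ Λ ⟩, where 1_j is the j-th standard multi-index. -/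
open MvPolynomial

section Aux

variable {K : Type*} [Field K] (p : ℕ) [Fact p.Prime] [ExpChar K p] [PerfectRing K p] {n : ℕ}

private lemma hp0 : 0 < p := (Fact.out : p.Prime).pos

set_option synthInstance.checkSynthOrder false in
instance : CharP K p := by
  cases ‹ExpChar K p› with
  | zero => exact absurd rfl (Fact.out (p := (1:ℕ).Prime)).ne_one
  | prime h => assumption

private lemma eq_smul_add_iff (α : Fin n → ℕ) (hα : ∀ i, α i < p) (d e : Fin n →₀ ℕ) :
    d = p • e + Finsupp.equivFunOnFinite.symm α ↔
      (∀ i, d i % p = α i) ∧ Finsupp.mapRange (· / p) (Nat.zero_div p) d = e := by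
  constructor
  · rintro rfl
    constructor
    · intro i
      simp only [Finsupp.add_apply, Finsupp.smul_apply, smul_eq_mul,
        Finsupp.coe_equivFunOnFinite_symm]
      rw [Nat.mul_add_mod]
      exact Nat.mod_eq_of_lt (hα i)
    · ext i
      simp only [Finsupp.mapRange_apply, Finsupp.add_apply, Finsupp.smul_apply, smul_eq_mul,
        Finsupp.coe_equivFunOnFinite_symm]
      rw [Nat.mul_add_div (hp0 p), Nat.div_eq_of_lt (hα i), add_zero]
  · rintro ⟨h1, rfl⟩
    ext i
    simp only [Finsupp.add_apply, Finsupp.smul_apply, smul_eq_mul, Finsupp.mapRange_apply,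
      Finsupp.coe_equivFunOnFinite_symm]
    rw [← h1 i]
    exact (Nat.div_add_mod (d i) p).symm

lemma frobCoeff_coeff (α : Fin n → ℕ) (hα : ∀ i, α i < p) (g : MvPolynomial (Fin n) K)
    (e : Fin n →₀ ℕ) :
    (frobCoeff p α g).coeff e
      = (frobeniusEquiv K p).symm (g.coeff (p • e + Finsupp.equivFunOnFinite.symm α)) := by
  classical
  set D : Fin n →₀ ℕ := p • e + Finsupp.equivFunOnFinite.symm α with hD
  have hDk := (eq_smul_add_iff p α hα D e).mp hD
  unfold frobCoeff
  rw [MvPolynomial.coeff_sum]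
  have key : ∀ d, MvPolynomial.coeff e
      (if ∀ i, d i % p = α i then
        monomial (Finsupp.mapRange (· / p) (Nat.zero_div p) d)
          ((frobeniusEquiv K p).symm (g.coeff d))
      else 0)
      = if d = D then (frobeniusEquiv K p).symm (g.coeff d) else 0 := by
    intro d
    by_cases hd : d = D
    · subst hd
      rw [if_pos hDk.1, coeff_monomial, if_pos hDk.2, if_pos rfl]
    · rw [if_neg hd]
      split_ifs with h1
      · rw [coeff_monomial]
        split_ifs with h2
        · exact absurd ((eq_smul_add_iff p α hα d e).mpr ⟨h1, h2⟩) hd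
        · rfl
      · exact coeff_zero e
  simp_rw [key]
  rw [Finset.sum_ite_eq' g.support D]
  split_ifs with h
  · rfl
  · rw [MvPolynomial.notMem_support_iff.mp h, map_zero]

lemma frobCoeff_zero (α : Fin n → ℕ) (hα : ∀ i, α i < p) :
    frobCoeff p α (0 : MvPolynomial (Fin n) K) = 0 := by
  ext e
  rw [frobCoeff_coeff p α hα]
  simp

lemma frobCoeff_add (α : Fin n → ℕ) (hα : ∀ i, α i < p) (g h : MvPolynomial (Fin n) K) :
    frobCoeff p α (g + h) = frobCoeff p α g + frobCoeff p α h := by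
  ext e
  simp only [frobCoeff_coeff p α hα, coeff_add, map_add]

lemma frobCoeff_sum {ι : Type*} (α : Fin n → ℕ) (hα : ∀ i, α i < p) (t : Finset ι)
    (g : ι → MvPolynomial (Fin n) K) :
    frobCoeff p α (∑ x ∈ t, g x) = ∑ x ∈ t, frobCoeff p α (g x) := by
  classical
  induction t using Finset.induction_on with
  | empty => simpa using frobCoeff_zero p α hα
  | insert x t hx ih =>
    rw [Finset.sum_insert hx, Finset.sum_insert hx, frobCoeff_add p α hα, ih]

lemma frobCoeff_C_mul (α : Fin n → ℕ) (hα : ∀ i, α i < p) (a : K)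
    (g : MvPolynomial (Fin n) K) :
    frobCoeff p α (C a * g) = C ((frobeniusEquiv K p).symm a) * frobCoeff p α g := by
  ext e
  simp only [frobCoeff_coeff p α hα, coeff_C_mul, map_mul]

lemma frobCoeff_monomial (α : Fin n → ℕ) (hα : ∀ i, α i < p) (d : Fin n →₀ ℕ) (a : K) :
    frobCoeff p α (monomial d a)
      = if ∀ i, d i % p = α i then
          monomial (Finsupp.mapRange (· / p) (Nat.zero_div p) d) ((frobeniusEquiv K p).symm a)
        else 0 := by
  ext e
  rw [frobCoeff_coeff p α hα, coeff_monomial,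
    apply_ite (MvPolynomial.coeff e), coeff_monomial, coeff_zero,
    apply_ite ((frobeniusEquiv K p).symm), map_zero]
  by_cases h : d = p • e + Finsupp.equivFunOnFinite.symm α
  · obtain ⟨h1, h2⟩ := (eq_smul_add_iff p α hα d e).mp h
    rw [if_pos h, if_pos h1, if_pos h2]
  · rw [if_neg h]
    split_ifs with h1 h2
    · exact absurd ((eq_smul_add_iff p α hα d e).mpr ⟨h1, h2⟩) h
    · rfl
    · rfl

lemma frobCoeff_pow_mul (α : Fin n → ℕ) (hα : ∀ i, α i < p) (u v : MvPolynomial (Fin n) K) :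
    frobCoeff p α (u ^ p * v) = u * frobCoeff p α v := by
  induction u using MvPolynomial.induction_on' with
  | add f g hf hg =>
    rw [add_pow_char _ _ p, add_mul, frobCoeff_add p α hα, hf, hg, add_mul]
  | monomial d a =>
    rw [monomial_pow]
    ext e
    rw [frobCoeff_coeff p α hα, MvPolynomial.coeff_monomial_mul',
      MvPolynomial.coeff_monomial_mul']
    have hle : p • d ≤ p • e + Finsupp.equivFunOnFinite.symm α ↔ d ≤ e := by
      rw [Finsupp.le_def, Finsupp.le_def]
      constructor
      · intro h i
        have h1 := h i
        simp only [Finsupp.add_apply, Finsupp.smul_apply, smul_eq_mul,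
          Finsupp.coe_equivFunOnFinite_symm] at h1
        by_contra hc
        push_neg at hc
        have h2 : p * (e i + 1) ≤ p * d i := Nat.mul_le_mul_left p hc
        have h3 := hα i
        rw [Nat.mul_add, Nat.mul_one] at h2
        omega
      · intro h i
        simp only [Finsupp.add_apply, Finsupp.smul_apply, smul_eq_mul,
          Finsupp.coe_equivFunOnFinite_symm]
        exact le_trans (Nat.mul_le_mul_left p (h i)) (Nat.le_add_right _ _)
    by_cases h : d ≤ e
    · rw [if_pos (hle.mpr h), if_pos h]
      have hsub : p • e + Finsupp.equivFunOnFinite.symm α - p • d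
          = p • (e - d) + Finsupp.equivFunOnFinite.symm α := by
        ext i
        have h1 : d i ≤ e i := Finsupp.le_def.mp h i
        simp only [Finsupp.tsub_apply, Finsupp.add_apply, Finsupp.smul_apply, smul_eq_mul,
          Finsupp.coe_equivFunOnFinite_symm]
        have h2 := Nat.mul_sub p (e i) (d i)
        have h3 : p * d i ≤ p * e i := Nat.mul_le_mul_left p h1
        omega
      rw [hsub, map_mul, ← frobenius_def, frobeniusEquiv_symm_apply_frobenius,
        frobCoeff_coeff p α hα]
    · rw [if_neg (fun hh => h (hle.mp hh)), if_neg h, map_zero]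

lemma frobCoeff_mul_X_ne (α : Fin n → ℕ) (hα : ∀ i, α i < p) (j : Fin n) (hj : α j ≠ 0)
    (v : MvPolynomial (Fin n) K) :
    frobCoeff p α (v * X j) = frobCoeff p (Function.update α j (α j - 1)) v := by
  classical
  have hα' : ∀ i, Function.update α j (α j - 1) i < p := by
    intro i
    rw [Function.update_apply]
    split_ifs
    · exact lt_of_le_of_lt (Nat.sub_le _ _) (hα j)
    · exact hα i
  ext e
  rw [frobCoeff_coeff p α hα, frobCoeff_coeff p _ hα', MvPolynomial.coeff_mul_X']
  have hmem : j ∈ (p • e + Finsupp.equivFunOnFinite.symm α).support := by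
    rw [Finsupp.mem_support_iff]
    simp only [Finsupp.add_apply, Finsupp.smul_apply, smul_eq_mul,
      Finsupp.coe_equivFunOnFinite_symm]
    omega
  rw [if_pos hmem]
  have heq : p • e + Finsupp.equivFunOnFinite.symm α - Finsupp.single j 1
      = p • e + Finsupp.equivFunOnFinite.symm (Function.update α j (α j - 1)) := by
    ext i
    simp only [Finsupp.tsub_apply, Finsupp.add_apply, Finsupp.smul_apply, smul_eq_mul,
      Finsupp.coe_equivFunOnFinite_symm, Finsupp.single_apply]
    by_cases hij : j = i
    · subst hij
      rw [if_pos rfl, Function.update_self]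
      omega
    · rw [if_neg hij, Function.update_of_ne (fun hh => hij hh.symm)]
      omega
  rw [heq]

lemma frobCoeff_mul_X_eq (α : Fin n → ℕ) (hα : ∀ i, α i < p) (j : Fin n) (hj : α j = 0)
    (v : MvPolynomial (Fin n) K) :
    frobCoeff p α (v * X j) = X j * frobCoeff p (Function.update α j (p - 1)) v := by
  classical
  have hα' : ∀ i, Function.update α j (p - 1) i < p := by
    intro i
    rw [Function.update_apply]
    split_ifs
    · have := hp0 p; omega
    · exact hα i
  ext e
  rw [frobCoeff_coeff p α hα, MvPolynomial.coeff_mul_X', MvPolynomial.coeff_X_mul']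
  have hDj : (p • e + Finsupp.equivFunOnFinite.symm α) j = p * e j := by
    simp only [Finsupp.add_apply, Finsupp.smul_apply, smul_eq_mul,
      Finsupp.coe_equivFunOnFinite_symm, hj, add_zero]
  have hp1 := hp0 p
  by_cases hej : j ∈ e.support
  · have hej' : 1 ≤ e j := Nat.one_le_iff_ne_zero.mpr (Finsupp.mem_support_iff.mp hej)
    have hmem : j ∈ (p • e + Finsupp.equivFunOnFinite.symm α).support := by
      rw [Finsupp.mem_support_iff, hDj]
      have : p * 1 ≤ p * e j := Nat.mul_le_mul_left p hej'
      omega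
    rw [if_pos hmem, if_pos hej, frobCoeff_coeff p _ hα']
    have heq : p • e + Finsupp.equivFunOnFinite.symm α - Finsupp.single j 1
        = p • (e - Finsupp.single j 1)
          + Finsupp.equivFunOnFinite.symm (Function.update α j (p - 1)) := by
      ext i
      simp only [Finsupp.tsub_apply, Finsupp.add_apply, Finsupp.smul_apply, smul_eq_mul,
        Finsupp.coe_equivFunOnFinite_symm, Finsupp.single_apply]
      by_cases hij : j = i
      · subst hij
        rw [if_pos rfl, Function.update_self, hj]
        have h2 := Nat.mul_sub p (e j) 1
        have h3 : p * 1 ≤ p * e j := Nat.mul_le_mul_left p hej'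
        omega
      · rw [if_neg hij, Function.update_of_ne (fun hh => hij hh.symm)]
        simp only [Nat.sub_zero]
    rw [heq]
  · have hej' : e j = 0 := Finsupp.notMem_support_iff.mp hej
    have hmem : j ∉ (p • e + Finsupp.equivFunOnFinite.symm α).support := by
      rw [Finsupp.notMem_support_iff, hDj, hej', Nat.mul_zero]
    rw [if_neg hmem, if_neg hej, map_zero]

lemma frobCoeff_mul_monomial (α β : Fin n → ℕ) (hα : ∀ i, α i < p) (hβ : ∀ i, β i ≤ α i)
    (v : MvPolynomial (Fin n) K) :
    frobCoeff p α (v * monomial (Finsupp.equivFunOnFinite.symm β) 1)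
      = frobCoeff p (fun i => α i - β i) v := by
  have hα' : ∀ i, α i - β i < p := fun i => lt_of_le_of_lt (Nat.sub_le _ _) (hα i)
  ext e
  rw [frobCoeff_coeff p α hα, frobCoeff_coeff p _ hα', MvPolynomial.coeff_mul_monomial']
  have hle : Finsupp.equivFunOnFinite.symm β ≤ p • e + Finsupp.equivFunOnFinite.symm α := by
    rw [Finsupp.le_def]
    intro i
    simp only [Finsupp.add_apply, Finsupp.smul_apply, smul_eq_mul,
      Finsupp.coe_equivFunOnFinite_symm]
    have := hβ i
    omega
  rw [if_pos hle, mul_one]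
  have heq : p • e + Finsupp.equivFunOnFinite.symm α - Finsupp.equivFunOnFinite.symm β
      = p • e + Finsupp.equivFunOnFinite.symm (fun i => α i - β i) := by
    ext i
    simp only [Finsupp.tsub_apply, Finsupp.add_apply, Finsupp.smul_apply, smul_eq_mul,
      Finsupp.coe_equivFunOnFinite_symm]
    have := hβ i
    omega
  rw [heq]

lemma prod_X_pow_univ (β : Fin n → ℕ) :
    (∏ i, X i ^ β i : MvPolynomial (Fin n) K)
      = monomial (Finsupp.equivFunOnFinite.symm β) 1 := by
  rw [← MvPolynomial.prod_X_pow_eq_monomial, eq_comm]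
  refine Finset.prod_subset (Finset.subset_univ _) (fun i _ hi => ?_) |>.trans ?_
  · rw [Finsupp.notMem_support_iff.mp hi, pow_zero]
  · exact Finset.prod_congr rfl fun i _ => by
      rw [Finsupp.coe_equivFunOnFinite_symm]

lemma frobCoeff_decomp (g : MvPolynomial (Fin n) K) :
    g = ∑ β : Fin n → Fin p, (frobCoeff p (fun i => (β i : ℕ)) g) ^ p
          * monomial (Finsupp.equivFunOnFinite.symm fun i => (β i : ℕ)) 1 := by
  classical
  have hβlt : ∀ (β : Fin n → Fin p) (i : Fin n), ((β i : ℕ)) < p := fun β i => (β i).isLt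
  induction g using MvPolynomial.induction_on' with
  | add f g hf hg =>
    rw [Finset.sum_congr rfl (fun β _ => by
      rw [frobCoeff_add p _ (hβlt β), add_pow_char _ _ p, add_mul])]
    rw [Finset.sum_add_distrib, ← hf, ← hg]
  | monomial d a =>
    rw [Finset.sum_congr rfl (fun β _ => by rw [frobCoeff_monomial p _ (hβlt β)])]
    have hp1 := hp0 p
    obtain ⟨β0, hβ0⟩ : ∃ β0 : Fin n → Fin p, ∀ i, (β0 i : ℕ) = d i % p :=
      ⟨fun i => ⟨d i % p, Nat.mod_lt _ hp1⟩, fun _ => rfl⟩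
    have key : ∀ β : Fin n → Fin p,
        (if ∀ i, d i % p = ((β i : ℕ)) then
            monomial (Finsupp.mapRange (· / p) (Nat.zero_div p) d) ((frobeniusEquiv K p).symm a)
          else 0) ^ p
          * monomial (Finsupp.equivFunOnFinite.symm fun i => ((β i : ℕ))) 1
        = if β = β0 then monomial d a else 0 := by
      intro β
      by_cases hb : β = β0
      · rw [if_pos (fun i => by rw [hb, hβ0]), if_pos hb, monomial_pow, monomial_mul, mul_one,
          ← frobenius_def, frobenius_apply_frobeniusEquiv_symm]
        have hd : p • Finsupp.mapRange (· / p) (Nat.zero_div p) d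
            + Finsupp.equivFunOnFinite.symm (fun i => ((β i : ℕ))) = d := by
          ext i
          simp only [Finsupp.add_apply, Finsupp.smul_apply, smul_eq_mul, Finsupp.mapRange_apply,
            Finsupp.coe_equivFunOnFinite_symm]
          rw [hb, hβ0]
          exact Nat.div_add_mod (d i) p
        rw [hd]
      · rw [if_neg, zero_pow hp1.ne', zero_mul, if_neg hb]
        intro hc
        exact hb (funext fun i => Fin.ext ((hc i).symm.trans (hβ0 i).symm))
    rw [Finset.sum_congr rfl fun β _ => key β, Finset.sum_ite_eq' Finset.univ β0,
      if_pos (Finset.mem_univ _)]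

lemma frobCoeff_expansion (s : (Fin n → ℕ) → MvPolynomial (Fin n) K)
    (f : MvPolynomial (Fin n) K)
    (hf : f = ∑ α : Fin n → Fin p, s (fun i => (α i : ℕ)) ^ p * ∏ i, X i ^ (α i : ℕ))
    (γ : Fin n → ℕ) (hγ : ∀ i, γ i < p) :
    frobCoeff p γ f = s γ := by
  classical
  obtain ⟨γ0, hγ0⟩ : ∃ γ0 : Fin n → Fin p, ∀ i, (γ0 i : ℕ) = γ i :=
    ⟨fun i => ⟨γ i, hγ i⟩, fun _ => rfl⟩
  have hγeq : (fun i => ((γ0 i : ℕ))) = γ := funext hγ0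
  rw [hf, frobCoeff_sum p γ hγ]
  have key : ∀ β : Fin n → Fin p,
      frobCoeff p γ (s (fun i => (β i : ℕ)) ^ p * ∏ i, X i ^ (β i : ℕ))
        = if β = γ0 then s (fun i => (β i : ℕ)) else 0 := by
    intro β
    rw [prod_X_pow_univ, frobCoeff_pow_mul p γ hγ, frobCoeff_monomial p γ hγ]
    by_cases hb : β = γ0
    · rw [if_pos (fun i => by
        simp only [Finsupp.coe_equivFunOnFinite_symm]
        rw [Nat.mod_eq_of_lt (β i).isLt, hb, hγ0]), if_pos hb]
      have hmap : Finsupp.mapRange (· / p) (Nat.zero_div p)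
          (Finsupp.equivFunOnFinite.symm fun i => ((β i : ℕ))) = 0 := by
        ext i
        simp only [Finsupp.mapRange_apply, Finsupp.coe_equivFunOnFinite_symm,
          Finsupp.coe_zero, Pi.zero_apply]
        exact Nat.div_eq_of_lt (β i).isLt
      rw [hmap, map_one, monomial_zero', C_1, mul_one]
    · rw [if_neg, mul_zero, if_neg hb]
      intro hc
      apply hb
      funext i
      have h1 := hc i
      simp only [Finsupp.coe_equivFunOnFinite_symm] at h1
      rw [Nat.mod_eq_of_lt (β i).isLt] at h1
      exact Fin.ext (h1.trans (hγ0 i).symm)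
  rw [Finset.sum_congr rfl fun β _ => key β, Finset.sum_ite_eq' Finset.univ γ0,
    if_pos (Finset.mem_univ _), hγeq]

lemma frobCoeff_gen (ff : MvPolynomial (Fin n) K) (c0 : K) (c : Fin n → K)
    (s : (Fin n → ℕ) → MvPolynomial (Fin n) K)
    (hf : ff = ∑ α : Fin n → Fin p, s (fun i => (α i : ℕ)) ^ p * ∏ i, X i ^ (α i : ℕ))
    (α : Fin n → Fin p) :
    frobCoeff p (fun i => (α i : ℕ)) (ff * (C c0 + ∑ j, C (c j) * X j)) =
      C ((frobeniusEquiv K p).symm c0) * s (fun i => (α i : ℕ)) +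
        (∑ j ∈ Finset.univ.filter fun j => (α j : ℕ) ≠ 0,
          C ((frobeniusEquiv K p).symm (c j)) *
            s (Function.update (fun i => (α i : ℕ)) j ((α j : ℕ) - 1))) +
        ∑ j ∈ Finset.univ.filter fun j => (α j : ℕ) = 0,
          C ((frobeniusEquiv K p).symm (c j)) * X j *
            s (Function.update (fun i => (α i : ℕ)) j (p - 1)) := by
  classical
  have hα : ∀ i, ((α i : ℕ)) < p := fun i => (α i).isLt
  have hp1 := hp0 p
  rw [mul_add, mul_comm ff (C c0), Finset.mul_sum, frobCoeff_add p _ hα,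
    frobCoeff_C_mul p _ hα, frobCoeff_expansion p s ff hf _ hα, frobCoeff_sum p _ hα,
    add_assoc]
  congr 1
  rw [← Finset.sum_filter_add_sum_filter_not Finset.univ (fun j => (α j : ℕ) ≠ 0)]
  congr 1
  · refine Finset.sum_congr rfl fun j hj => ?_
    rw [Finset.mem_filter] at hj
    have hupd : ∀ i, Function.update (fun i => ((α i : ℕ))) j (((α j : ℕ)) - 1) i < p := by
      intro i
      rw [Function.update_apply]
      split_ifs
      · omega
      · exact hα i
    rw [mul_left_comm, frobCoeff_C_mul p _ hα, frobCoeff_mul_X_ne p _ hα j hj.2,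
      frobCoeff_expansion p s ff hf _ hupd]
  · have hfil : Finset.univ.filter (fun j => ¬ ((α j : ℕ) ≠ 0))
        = Finset.univ.filter (fun j => (α j : ℕ) = 0) := by
      ext j
      simp [Finset.mem_filter]
    rw [hfil]
    refine Finset.sum_congr rfl fun j hj => ?_
    rw [Finset.mem_filter] at hj
    have hupd : ∀ i, Function.update (fun i => ((α i : ℕ))) j (p - 1) i < p := by
      intro i
      rw [Function.update_apply]
      split_ifs
      · omega
      · exact hα i
    rw [mul_left_comm, frobCoeff_C_mul p _ hα, frobCoeff_mul_X_eq p _ hα j hj.2,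
      frobCoeff_expansion p s ff hf _ hupd, ← mul_assoc]

end Aux

/-- explicit generators of `Φ(F_*(f·l·S))`: if
`f = Σ_(α ∈ Λ) s_α^p x^α` and `l = c₀ + c_1x_1 + … + c_nx_n`, then
`Φ(F_*(f·l·S)) = ⟨ c₀^(1/p) s_α + Σ_(j : α_j > 0) c_j^(1/p) s_(α-1_j)
  + Σ_(j : α_j = 0) c_j^(1/p) s_(α+(p-1)·1_j) x_j : α ∈ Λ ⟩`. -/
theorem statement19 {K : Type*} [Field K] (p : ℕ) [Fact p.Prime] [ExpChar K p]
    [PerfectRing K p] (n : ℕ) (f : MvPolynomial (Fin n) K) (c0 : K) (c : Fin n → K)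
    (s : (Fin n → ℕ) → MvPolynomial (Fin n) K)
    (hf : f = ∑ α : Fin n → Fin p, s (fun i => (α i : ℕ)) ^ p * ∏ i, X i ^ (α i : ℕ)) :
    tauP p (f * (C c0 + ∑ j, C (c j) * X j)) =
      Ideal.span (Set.range fun α : Fin n → Fin p =>
        C ((frobeniusEquiv K p).symm c0) * s (fun i => (α i : ℕ)) +
          (∑ j ∈ Finset.univ.filter fun j => (α j : ℕ) ≠ 0,
            C ((frobeniusEquiv K p).symm (c j)) *
              s (Function.update (fun i => (α i : ℕ)) j ((α j : ℕ) - 1))) +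
          ∑ j ∈ Finset.univ.filter fun j => (α j : ℕ) = 0,
            C ((frobeniusEquiv K p).symm (c j)) * X j *
              s (Function.update (fun i => (α i : ℕ)) j (p - 1))) := by
  classical
  have hp1 : 0 < p := (Fact.out : p.Prime).pos
  have hpm1 : ∀ i : Fin n, (fun _ => p - 1 : Fin n → ℕ) i < p := fun _ => by show p - 1 < p; omega
  have hgen := frobCoeff_gen p f c0 c s hf
  apply le_antisymm
  · rw [tauP, Ideal.span_le]
    rintro g ⟨h, rfl⟩
    rw [SetLike.mem_coe, phi, frobCoeff_decomp p h, Finset.mul_sum,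
      frobCoeff_sum p _ hpm1]
    apply Ideal.sum_mem
    intro β _
    have hre : f * (C c0 + ∑ j, C (c j) * X j) *
        ((frobCoeff p (fun i => (β i : ℕ)) h) ^ p *
          monomial (Finsupp.equivFunOnFinite.symm fun i => (β i : ℕ)) 1)
        = (frobCoeff p (fun i => (β i : ℕ)) h) ^ p *
          (f * (C c0 + ∑ j, C (c j) * X j) *
            monomial (Finsupp.equivFunOnFinite.symm fun i => (β i : ℕ)) 1) := by ring
    rw [hre, frobCoeff_pow_mul p _ hpm1,
      frobCoeff_mul_monomial p _ _ hpm1 (fun i => by show ((β i : ℕ)) ≤ p - 1; have := (β i).isLt; omega)]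
    apply Ideal.mul_mem_left
    apply Ideal.subset_span
    exact ⟨fun i => ⟨p - 1 - (β i : ℕ), by omega⟩, (hgen _).symm⟩
  · rw [Ideal.span_le]
    rintro g ⟨α, rfl⟩
    rw [SetLike.mem_coe, tauP]
    apply Ideal.subset_span
    refine ⟨monomial (Finsupp.equivFunOnFinite.symm fun i => p - 1 - (α i : ℕ)) 1, ?_⟩
    beta_reduce
    rw [← hgen α, phi,
      frobCoeff_mul_monomial p _ _ hpm1 (fun i => by show p - 1 - ((α i : ℕ)) ≤ p - 1; omega)]
    have harg : (fun i => ((α i : ℕ)))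
        = (fun i => (fun _ => p - 1 : Fin n → ℕ) i - (fun i => p - 1 - ((α i : ℕ))) i) := by
      funext i
      have := (α i).isLt
      show ((α i : ℕ)) = p - 1 - (p - 1 - ((α i : ℕ)))
      omega
    rw [harg]
end
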